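/- arXiv:1111.1514 — 3 statements merged into one kernel-verified Lean document; each statement's English description precedes it below -/
import Mathlib

section
/- Let V be a type, let nextHop : V → V, seq : V → ℕ and hop : V → ℕ be functions such that for every v : V, seq v ≤ seq (nextHop v), and whenever seq v = seq (nextHop v) one has hop v = hop (nextHop v) + 1. Then the next-hop map has no nontrivial cycles: for every v : V and every m ≥ 1, nextHop^[m] v ≠ v. -/
theorem aodv_loop_free {V : Type*} (nextHop : V → V) (seq hop : V → ℕ)
    (hseq : ∀ v, seq v ≤ seq (nextHop v))
    (hhop : ∀ v, seq v = seq (nextHop v) → hop v = hop (nextHop v) + 1) :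
    ∀ (v : V) (m : ℕ), 1 ≤ m → nextHop^[m] v ≠ v := by
  -- seq is monotone along iterates
  have mono : ∀ (k : ℕ) (v : V), seq v ≤ seq (nextHop^[k] v) := by
    intro k
    induction k with
    | zero => intro v; simp
    | succ n ih =>
      intro v
      rw [Function.iterate_succ_apply]
      exact (hseq v).trans (ih (nextHop v))
  intro v m hm hcyc
  -- seq constant along the cycle
  have hconst : ∀ k ≤ m, seq (nextHop^[k] v) = seq v := by
    intro k hk
    refine le_antisymm ?_ (mono k v)
    have : nextHop^[m - k] (nextHop^[k] v) = v := by
      rw [← Function.iterate_add_apply, Nat.sub_add_cancel hk, hcyc]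
    calc seq (nextHop^[k] v) ≤ seq (nextHop^[m-k] (nextHop^[k] v)) := mono _ _
      _ = seq v := by rw [this]
  -- hop decreases
  have hhopk : ∀ k ≤ m, hop v = hop (nextHop^[k] v) + k := by
    intro k
    induction k with
    | zero => simp
    | succ n ih =>
      intro hk
      have hn : n ≤ m := Nat.le_of_succ_le hk
      have h1 : seq (nextHop^[n] v) = seq (nextHop (nextHop^[n] v)) := by
        rw [show nextHop (nextHop^[n] v) = nextHop^[n+1] v from (Function.iterate_succ_apply' nextHop n v).symm,
          hconst (n+1) hk, hconst n hn]
      rw [ih hn, hhop _ h1, Function.iterate_succ_apply']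
      omega
  have := hhopk m le_rfl
  rw [hcyc] at this
  omega
end

section
/- Let G be a simple graph on a finite type V, let s : V, and define d₀ : V → ℕ∞ by d₀ s = 0 and d₀ v = ⊤ for v ≠ s. Define the synchronous Bellman–Ford update F : (V → ℕ∞) → (V → ℕ∞) by F d v = min (d v) ((⨅ u ∈ G.neighborSet v, d u) + 1). Then for every k : ℕ and every v : V with G.edist s v ≤ k, one has F^[k] d₀ v = G.edist s v. -/
/-!
A round never pushes an estimate below `G.edist s`, since a neighbour's estimate plus one still
dominates the distance by the triangle inequality; so `G.edist s` is a lower bound throughout.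
Conversely, a round carries information one edge further, so after `k` rounds the estimate at `v`
is at most `d₀ u + p.length` for every walk `p` from `u` to `v` of length at most `k`; a shortest
walk from `s` gives the matching upper bound.
-/

namespace SimpleGraph

variable {V : Type*} (G : SimpleGraph V)

noncomputable def bellmanFordStep (d : V → ℕ∞) (v : V) : ℕ∞ :=
  min (d v) ((⨅ u ∈ G.neighborSet v, d u) + 1)

variable {G}

theorem bellmanFordStep_le_self (d : V → ℕ∞) (v : V) : G.bellmanFordStep d v ≤ d v :=
  min_le_left _ _

theorem bellmanFordStep_le_of_adj (d : V → ℕ∞) {u v : V} (h : G.Adj u v) :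
    G.bellmanFordStep d v ≤ d u + 1 :=
  (min_le_right _ _).trans (add_le_add_left (iInf₂_le (f := fun u _ => d u) u h.symm) 1)

theorem iterate_bellmanFordStep_le_self (d : V → ℕ∞) (k : ℕ) (v : V) :
    G.bellmanFordStep^[k] d v ≤ d v :=
  Function.Iterate.rec (fun d' : V → ℕ∞ => ∀ v, d' v ≤ d v) (fun _ => le_rfl)
    (fun d' hd' v => (bellmanFordStep_le_self d' v).trans (hd' v)) k v

theorem iterate_bellmanFordStep_le_add_length {u v : V} (p : G.Walk u v) (d : V → ℕ∞) {k : ℕ}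
    (hk : p.length ≤ k) : G.bellmanFordStep^[k] d v ≤ d u + p.length := by
  induction p generalizing d k with
  | nil => simpa using iterate_bellmanFordStep_le_self d k _
  | @cons u w v h q ih =>
    obtain ⟨k, rfl⟩ := Nat.exists_eq_add_of_le' (Nat.zero_lt_of_lt hk)
    rw [Function.iterate_succ_apply]
    calc G.bellmanFordStep^[k] (G.bellmanFordStep d) v
        ≤ G.bellmanFordStep d w + q.length := ih _ (by simpa using hk)
      _ ≤ d u + 1 + q.length := add_le_add_left (bellmanFordStep_le_of_adj d h) _
      _ = d u + (q.cons h).length := by push_cast [Walk.length_cons]; ring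

theorem edist_le_bellmanFordStep {s : V} {d : V → ℕ∞} (hd : ∀ u, G.edist s u ≤ d u) (v : V) :
    G.edist s v ≤ G.bellmanFordStep d v := by
  refine le_min (hd v) ?_
  rw [← tsub_le_iff_right]
  refine le_iInf₂ fun u hu => ?_
  rw [tsub_le_iff_right]
  calc G.edist s v ≤ G.edist s u + G.edist u v := G.edist_triangle
    _ = G.edist s u + 1 := by rw [edist_eq_one_iff_adj.mpr ((G.mem_neighborSet v u).mp hu).symm]
    _ ≤ d u + 1 := add_le_add_left (hd u) 1

theorem edist_le_iterate_bellmanFordStep {s : V} {d : V → ℕ∞} (hd : ∀ u, G.edist s u ≤ d u)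
    (k : ℕ) (v : V) : G.edist s v ≤ G.bellmanFordStep^[k] d v :=
  Function.Iterate.rec (fun d' : V → ℕ∞ => ∀ u, G.edist s u ≤ d' u) hd
    (fun _ hd' => edist_le_bellmanFordStep hd') k v

end SimpleGraph

theorem bellman_ford_converged_of_edist_le_general {V : Type*}
    (G : SimpleGraph V) (s : V)
    (d₀ : V → ℕ∞) (hd₀s : d₀ s = 0) (hd₀ : ∀ v, v ≠ s → d₀ v = ⊤)
    (F : (V → ℕ∞) → (V → ℕ∞))
    (hF : ∀ d v, F d v = min (d v) ((⨅ u ∈ G.neighborSet v, d u) + 1)) :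
    ∀ (k : ℕ) (v : V), G.edist s v ≤ k → F^[k] d₀ v = G.edist s v := by
  obtain rfl : F = G.bellmanFordStep := funext fun d => funext (hF d)
  intro k v hk
  have hd₀_ge (u : V) : G.edist s u ≤ d₀ u := by
    rcases eq_or_ne u s with rfl | hu
    · simp [hd₀s]
    · simp [hd₀ u hu]
  obtain ⟨p, hp⟩ :=
    G.exists_walk_of_edist_ne_top (ne_top_of_le_ne_top (ENat.natCast_ne_top k) hk)
  refine le_antisymm ?_ (SimpleGraph.edist_le_iterate_bellmanFordStep hd₀_ge k v)
  calc G.bellmanFordStep^[k] d₀ v ≤ d₀ s + p.length :=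
        SimpleGraph.iterate_bellmanFordStep_le_add_length p d₀ (by exact_mod_cast hp ▸ hk)
    _ = G.edist s v := by rw [hd₀s, zero_add, hp]

theorem bellman_ford_converged_of_edist_le {V : Type*} [Fintype V] [DecidableEq V]
    (G : SimpleGraph V) (s : V)
    (d₀ : V → ℕ∞) (hd₀s : d₀ s = 0) (hd₀ : ∀ v, v ≠ s → d₀ v = ⊤)
    (F : (V → ℕ∞) → (V → ℕ∞))
    (hF : ∀ d v, F d v = min (d v) ((⨅ u ∈ G.neighborSet v, d u) + 1)) :
    ∀ (k : ℕ) (v : V), G.edist s v ≤ k → F^[k] d₀ v = G.edist s v :=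
  bellman_ford_converged_of_edist_le_general G s d₀ hd₀s hd₀ F hF
end

section
/- Let G be a simple graph on a finite type V, let s : V, and define d₀ : V → ℕ∞ by d₀ s = 0 and d₀ v = ⊤ for v ≠ s. Define the synchronous Bellman–Ford update F : (V → ℕ∞) → (V → ℕ∞) by F d v = min (d v) ((⨅ u ∈ G.neighborSet v, d u) + 1). Then for every k : ℕ and every v : V with G.edist s v > k, one has F^[k] d₀ v = ⊤. -/
theorem bellman_ford_top_of_edist_gt {V : Type*} [Fintype V] [DecidableEq V]
    (G : SimpleGraph V) (s : V)
    (d₀ : V → ℕ∞) (hd₀s : d₀ s = 0) (hd₀ : ∀ v, v ≠ s → d₀ v = ⊤)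
    (F : (V → ℕ∞) → (V → ℕ∞))
    (hF : ∀ d v, F d v = min (d v) ((⨅ u ∈ G.neighborSet v, d u) + 1)) :
    ∀ (k : ℕ) (v : V), G.edist s v > k → F^[k] d₀ v = ⊤ := by
  intro k
  induction k with
  | zero =>
    intro v hv
    simp only [Function.iterate_zero, id]
    apply hd₀
    intro h
    subst h
    simp [SimpleGraph.edist_self] at hv
  | succ k ih =>
    intro v hv
    rw [Function.iterate_succ_apply', hF]
    have h1 : F^[k] d₀ v = ⊤ := by
      apply ih
      exact lt_trans (by exact_mod_cast Nat.lt_succ_self k) hv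
    have h2 : ∀ u ∈ G.neighborSet v, F^[k] d₀ u = ⊤ := by
      intro u hu
      apply ih
      have hadj : G.Adj u v := (G.mem_neighborSet v u).mp hu |>.symm
      have htri : G.edist s v ≤ G.edist s u + 1 := by
        calc G.edist s v ≤ G.edist s u + G.edist u v := G.edist_triangle
          _ ≤ G.edist s u + 1 := by
            gcongr
            exact le_of_eq (SimpleGraph.edist_eq_one_iff_adj.mpr hadj)
      by_contra hle
      push_neg at hle
      have h3 : G.edist s v ≤ (k : ℕ∞) + 1 := le_trans htri (by gcongr)
      have : ((k + 1 : ℕ) : ℕ∞) = (k : ℕ∞) + 1 := by push_cast; ring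
      rw [this] at hv
      exact absurd h3 (not_le.mpr hv)
    rw [h1]
    have : (⨅ u ∈ G.neighborSet v, F^[k] d₀ u) = ⊤ := by
      simp only [iInf_eq_top]
      exact fun u hu => h2 u hu
    simp only [SimpleGraph.mem_neighborSet] at this
    simp [this]
end
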